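/- Let k be a field of characteristic ≠ 2 with algebraic closure k̄, let a₀, a₁, a₂, a₃ ∈ k[U, V] be homogeneous polynomials of degree 2 with a₀ ≠ 0, and let α ∈ k. Assume a₁² − 4·a₂·a₀ = 4·α·a₃·a₀ in k[U, V], and that there is no homogeneous linear form ℓ ∈ k̄[U, V] such that ℓ² divides the image of a₀ and ℓ divides the image of a₁ in k̄[U, V]. Then there exists β ∈ k such that a₁ = 2β·a₀ and β²·a₀ = a₂ + α·a₃. -/

import Mathlib

open MvPolynomial

/-! Over `k̄`, the identity `a₁² = a₀ (4a₂ + 4αa₃)` makes `a₀` divide `a₁²`. A square `x²`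
dividing the quadratic form `a₀` is, by counting degrees, the square of a linear form
(up to a constant), and a linear form is prime; so `x` would divide `a₁`, which the hypothesis
forbids. Hence `a₀` is squarefree, so `a₀ ∣ a₁`, and as both are quadratic forms `a₁ = γ a₀`
with `γ` necessarily in `k`. Taking `β = γ / 2` and cancelling `4a₀` in the identity gives
`β² a₀ = a₂ + α a₃`. -/

namespace MvPolynomial

variable {σ : Type*}

lemma isHomogeneous_one_of_totalDegree_le_one {R : Type*} [CommSemiring R]
    {p : MvPolynomial σ R} (hp : p.totalDegree ≤ 1) (h0 : constantCoeff p = 0) :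
    p.IsHomogeneous 1 := by
  intro d hd
  have hd0 : d ≠ 0 := by rintro rfl; exact hd h0
  have hle : d.degree ≤ 1 := (le_totalDegree (mem_support_iff.mpr hd)).trans hp
  have hpos : d.degree ≠ 0 := fun h => hd0 ((Finsupp.degree_eq_zero_iff d).mp h)
  rw [Pi.one_def, ← Finsupp.degree_eq_weight_one]
  omega

variable {K : Type*} [Field K]

lemma irreducible_of_isHomogeneous_one {p : MvPolynomial σ K} (hp : p.IsHomogeneous 1)
    (hp0 : p ≠ 0) : Irreducible p := by
  obtain ⟨d, hd⟩ := ne_zero_iff.mp hp0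
  refine irreducible_of_totalDegree_eq_one (hp.totalDegree hp0) fun c hc => ?_
  exact isUnit_iff_ne_zero.mpr (ne_zero_of_dvd_ne_zero hd (hc d))

namespace IsHomogeneous

lemma isHomogeneous_one_of_mul_self_dvd {A x : MvPolynomial σ K} (hA : A.IsHomogeneous 2)
    (hA0 : A ≠ 0) (hx : x * x ∣ A) (hu : ¬IsUnit x) : x.IsHomogeneous 1 := by
  obtain ⟨r, rfl⟩ := hx
  have hx0 : x ≠ 0 := by rintro rfl; simp at hA0
  have hr0 : r ≠ 0 := by rintro rfl; simp at hA0
  have hdeg := hA.totalDegree hA0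
  rw [totalDegree_mul_of_isDomain (mul_ne_zero hx0 hx0) hr0,
    totalDegree_mul_of_isDomain hx0 hx0] at hdeg
  have hx1 : x.totalDegree ≠ 0 := fun h => hu <| isUnit_iff_totalDegree_of_isReduced.mpr
    ⟨isUnit_iff_ne_zero.mpr fun hc => hx0 (by rw [totalDegree_eq_zero_iff_eq_C.mp h, hc, C_0]), h⟩
  have hr : r = C (constantCoeff r) := totalDegree_eq_zero_iff_eq_C.mp (by omega)
  have hrc : constantCoeff r ≠ 0 := fun hc => hr0 (by rw [hr, hc, C_0])
  have hA00 : constantCoeff (x * x * r) = 0 := hA.coeff_eq_zero (by simp)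
  rw [map_mul, map_mul, mul_eq_zero, mul_self_eq_zero] at hA00
  exact isHomogeneous_one_of_totalDegree_le_one (by omega) (hA00.resolve_right hrc)

lemma squarefree_of_dvd_sq {A B : MvPolynomial σ K} (hA : A.IsHomogeneous 2) (hA0 : A ≠ 0)
    (hdvd : A ∣ B ^ 2) (hnd : ¬∃ ℓ : MvPolynomial σ K, ℓ.IsHomogeneous 1 ∧ ℓ ^ 2 ∣ A ∧ ℓ ∣ B) :
    Squarefree A := by
  intro x hx
  by_contra hu
  have hℓ := hA.isHomogeneous_one_of_mul_self_dvd hA0 hx hu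
  have hprime : Prime x :=
    (irreducible_of_isHomogeneous_one hℓ (by rintro rfl; exact hA0 (by simpa using hx))).prime
  have hxB : x ∣ B := hprime.dvd_of_dvd_pow ((dvd_mul_right x x).trans (hx.trans hdvd))
  exact hnd ⟨x, hℓ, sq x ▸ hx, hxB⟩

lemma exists_eq_C_mul_of_dvd {R : Type*} [CommRing R] [IsDomain R] {A B : MvPolynomial σ R}
    {n : ℕ} (hA : A.IsHomogeneous n) (hB : B.IsHomogeneous n) (hA0 : A ≠ 0) (h : A ∣ B) :
    ∃ c : R, B = C c * A := by
  obtain ⟨q, rfl⟩ := h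
  obtain rfl | hq0 := eq_or_ne q 0
  · exact ⟨0, by simp⟩
  have hdeg := hB.totalDegree (mul_ne_zero hA0 hq0)
  rw [totalDegree_mul_of_isDomain hA0 hq0, hA.totalDegree hA0] at hdeg
  exact ⟨coeff 0 q, by rw [mul_comm, ← totalDegree_eq_zero_iff_eq_C.mp (by omega)]⟩

end IsHomogeneous

lemma exists_eq_C_mul_of_map_eq_C_mul {L : Type*} [Field L] {f : K →+* L}
    {a b : MvPolynomial σ K} (ha : a ≠ 0) {γ : L} (h : map f b = C γ * map f a) :
    ∃ β : K, b = C β * a := by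
  obtain ⟨d, hd⟩ := ne_zero_iff.mp ha
  refine ⟨coeff d b / coeff d a, map_injective f f.injective ?_⟩
  have hγ : γ = f (coeff d b / coeff d a) := by
    have hcoeff := congrArg (coeff d) h
    rw [coeff_C_mul, coeff_map, coeff_map] at hcoeff
    rw [map_div₀, hcoeff, mul_div_cancel_right₀ γ ((map_ne_zero f).mpr hd)]
  rw [h, map_mul, map_C, hγ]

end MvPolynomial

theorem binary_forms_constant_doubling_general (k : Type*) [Field k] (hk : ringChar k ≠ 2)
    (a₀ a₁ a₂ a₃ : MvPolynomial (Fin 2) k)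
    (h₀ : a₀.IsHomogeneous 2) (h₁ : a₁.IsHomogeneous 2)
    (ha₀ : a₀ ≠ 0) (α : k)
    (heq : a₁ ^ 2 - 4 * a₂ * a₀ = 4 * C α * a₃ * a₀)
    (hnd : ¬ ∃ ℓ : MvPolynomial (Fin 2) (AlgebraicClosure k),
      ℓ.IsHomogeneous 1 ∧
      ℓ ^ 2 ∣ MvPolynomial.map (algebraMap k (AlgebraicClosure k)) a₀ ∧
      ℓ ∣ MvPolynomial.map (algebraMap k (AlgebraicClosure k)) a₁) :
    ∃ β : k, a₁ = 2 * C β * a₀ ∧ C β ^ 2 * a₀ = a₂ + C α * a₃ := by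
  set f := algebraMap k (AlgebraicClosure k)
  have hA₀ : map f a₀ ≠ 0 := fun h => ha₀ (map_injective f f.injective (by rw [h, map_zero]))
  have hdvd : a₀ ∣ a₁ ^ 2 := ⟨4 * a₂ + 4 * C α * a₃, by linear_combination heq⟩
  have hdvd' : map f a₀ ∣ map f a₁ ^ 2 := map_pow (map f) a₁ 2 ▸ map_dvd (map f) hdvd
  have hsq : Squarefree (map f a₀) := (h₀.map f).squarefree_of_dvd_sq hA₀ hdvd' hnd
  obtain ⟨γ, hγ⟩ := (h₀.map f).exists_eq_C_mul_of_dvd (h₁.map f) hA₀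
    ((hsq.dvd_pow_iff_dvd two_ne_zero).mp hdvd')
  obtain ⟨β₀, hβ₀⟩ := exists_eq_C_mul_of_map_eq_C_mul ha₀ hγ
  have h2 : (2 : k) ≠ 0 := Ring.two_ne_zero hk
  have h2C : (2 : MvPolynomial (Fin 2) k) ≠ 0 := by
    rw [← map_ofNat C 2]; exact (map_ne_zero C).mpr h2
  obtain ⟨β, rfl⟩ : ∃ β : k, a₁ = 2 * C β * a₀ :=
    ⟨β₀ / 2, by rw [hβ₀, ← map_ofNat C 2, ← C_mul, mul_div_cancel₀ β₀ h2]⟩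
  refine ⟨β, rfl, mul_left_cancel₀ (mul_ne_zero (pow_ne_zero 2 h2C) ha₀) ?_⟩
  linear_combination heq

/-- **The key algebraic step in the classification of Type S conic bundles with constant
doubling.** (Kollár–Mella, proof of Proposition 13) -/
theorem binary_forms_constant_doubling (k : Type*) [Field k] (hk : ringChar k ≠ 2)
    (a₀ a₁ a₂ a₃ : MvPolynomial (Fin 2) k)
    (h₀ : a₀.IsHomogeneous 2) (h₁ : a₁.IsHomogeneous 2)
    (h₂ : a₂.IsHomogeneous 2) (h₃ : a₃.IsHomogeneous 2)
    (ha₀ : a₀ ≠ 0) (α : k)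
    (heq : a₁ ^ 2 - 4 * a₂ * a₀ = 4 * C α * a₃ * a₀)
    (hnd : ¬ ∃ ℓ : MvPolynomial (Fin 2) (AlgebraicClosure k),
      ℓ.IsHomogeneous 1 ∧
      ℓ ^ 2 ∣ MvPolynomial.map (algebraMap k (AlgebraicClosure k)) a₀ ∧
      ℓ ∣ MvPolynomial.map (algebraMap k (AlgebraicClosure k)) a₁) :
    ∃ β : k, a₁ = 2 * C β * a₀ ∧ C β ^ 2 * a₀ = a₂ + C α * a₃ :=
  binary_forms_constant_doubling_general k hk a₀ a₁ a₂ a₃ h₀ h₁ ha₀ α heq hnd
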